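/- arXiv:2005.03433 — 2 statements merged into one kernel-verified Lean document; each statement's English description precedes it below -/
import Mathlib

section
/- Assume α ∈ W^{2,∞}(D) with α ≥ α_min > 0. Then for every f ∈ X(D), the function Tf satisfies Δ²(Tf) ∈ L²(D) with the estimate ‖Δ²(Tf)‖_{L²(D)} ≤ C‖f‖_{L²(D)} for a constant C independent of f. -/
/-!
Put `w = α Δu`, so that `Δw = β f` in `D` and `w = 0` on `∂D`. Integration by parts,
`∫ |∇w|² = -∫ w Δw`, together with the Poincaré inequality `∫ w² ≤ 4 R² ∫ |∇w|²` for
`D ⊆ B(0, R)` (which comes from `∫ ∂₁ (x₁ w²) = 0`), bounds `‖w‖` and `‖∇w‖` by `‖β f‖ ≤ Mβ ‖f‖`.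
As `α ≥ αmin > 0`, this controls in turn `Δu = w / α`, then `∇Δu` through
`∇w = α ∇Δu + Δu ∇α`, and finally `Δ²u` through `Δw = α Δ²u + 2 ∇α · ∇Δu + Δu Δα`.
All boundary terms vanish because, by Fubini, each is a sum of one-dimensional integrals `∫ h'`
over open subsets of lines on whose boundary `h = 0`.
-/

open MeasureTheory

/-- The Laplacian of a function on Euclidean space. -/
noncomputable def lap {d : ℕ} (f : EuclideanSpace ℝ (Fin d) → ℝ)
    (x : EuclideanSpace ℝ (Fin d)) : ℝ :=
  ∑ i : Fin d, iteratedFDeriv ℝ 2 f x ![EuclideanSpace.single i (1 : ℝ), EuclideanSpace.single i (1 : ℝ)]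

open Set Filter Topology

theorem Set.Countable.of_forall_eventually_notMem {X : Type*} [TopologicalSpace X]
    [SecondCountableTopology X] {s : Set X} (hs : ∀ x ∈ s, ∀ᶠ y in 𝓝[≠] x, y ∉ s) :
    s.Countable :=
  (HereditarilyLindelofSpace.isLindelof s).countable_of_isDiscrete
    (isDiscrete_iff_nhdsNE.2 fun x hx => inf_principal_eq_bot.2 (hs x hx))

theorem hasDerivAt_zero_of_abs_le {f g : ℝ → ℝ} {t : ℝ} (hg : HasDerivAt g 0 t) (hgt : g t = 0)
    (hf : ∀ s, |f s| ≤ |g s|) : HasDerivAt f 0 t := by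
  have hft : f t = 0 := abs_nonpos_iff.1 (by simpa [hgt] using hf t)
  rw [hasDerivAt_iff_isLittleO] at hg ⊢
  refine (Asymptotics.IsBigO.of_bound 1 (Eventually.of_forall fun s => ?_)).trans_isLittleO hg
  simpa [hft, hgt] using hf s

theorem hasDerivAt_indicator_of_eq_zero_on_frontier {S : Set ℝ} (hS : IsOpen S) {h : ℝ → ℝ}
    (hh : Differentiable ℝ h) (hfr : ∀ t ∈ frontier S, h t = 0) {t : ℝ}
    (ht : h t = 0 → deriv h t = 0) :
    HasDerivAt (S.indicator h) (S.indicator (deriv h) t) t := by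
  by_cases htS : t ∈ S
  · rw [indicator_of_mem htS]
    exact (hh t).hasDerivAt.congr_of_eventuallyEq
      (eventuallyEq_of_mem (hS.mem_nhds htS) fun s hs => indicator_of_mem hs h)
  rw [indicator_of_notMem htS]
  by_cases htc : t ∈ closure S
  · have hht : h t = 0 := hfr t ⟨htc, by rwa [hS.interior_eq]⟩
    refine hasDerivAt_zero_of_abs_le (ht hht ▸ (hh t).hasDerivAt) hht fun s => ?_
    by_cases hs : s ∈ S <;> simp [hs]
  · refine (hasDerivAt_const t 0).congr_of_eventuallyEq
      (eventuallyEq_of_mem (isClosed_closure.isOpen_compl.mem_nhds htc) fun s hs => ?_)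
    exact indicator_of_notMem (fun h' => hs (subset_closure h')) h

/-- The extension of `h` by zero is continuous, and differentiable with derivative
`S.indicator (deriv h)` except at the zeros of `h` where `deriv h ≠ 0`; these are isolated, hence
countably many, so the fundamental theorem of calculus still applies to it. -/
theorem setIntegral_deriv_eq_zero {S : Set ℝ} (hS : IsOpen S) (hSb : Bornology.IsBounded S)
    {h : ℝ → ℝ} (hh : ContDiff ℝ 1 h) (hfr : ∀ t ∈ frontier S, h t = 0) :
    ∫ t in S, deriv h t = 0 := by
  obtain ⟨r, hr0, hr⟩ := hSb.subset_closedBall_lt 0 0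
  have hSab : S ⊆ Ioo (-r - 1) (r + 1) := fun t ht => by
    have := abs_le.1 (by simpa using hr ht); constructor <;> linarith
  have hhd : Differentiable ℝ h := hh.differentiable one_ne_zero
  set E := {t | h t = 0 ∧ deriv h t ≠ 0}
  have hE : E.Countable := Set.Countable.of_forall_eventually_notMem fun t ht =>
    ((hhd t).hasDerivAt.eventually_ne ht.2).mono fun s hs hsE => hs (hsE.1.trans ht.1.symm)
  have hint : IntegrableOn (S.indicator (deriv h)) (Icc (-r - 1) (r + 1)) :=
    (hh.continuous_deriv le_rfl).integrableOn_Icc.indicator hS.measurableSet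
  have hftc := integral_eq_of_hasDerivAt_off_countable_of_le _ _ (by linarith) hE
    (continuous_indicator hfr hh.continuous.continuousOn).continuousOn
    (fun t ht => hasDerivAt_indicator_of_eq_zero_on_frontier hS hhd hfr fun h0 => by
      simpa [E, h0] using ht.2)
    ((intervalIntegrable_iff_integrableOn_Icc_of_le (by linarith)).2 hint)
  rw [indicator_of_notMem (fun h' => by simpa using (hSab h').2),
    indicator_of_notMem (fun h' => by simpa using (hSab h').1), sub_zero,
    intervalIntegral.integral_of_le (by linarith), setIntegral_indicator hS.measurableSet,
    inter_eq_right.2 (hSab.trans Ioo_subset_Ioc_self)] at hftc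
  exact hftc

section ContinuousOnBounded

variable {X : Type*} [MetricSpace X] [ProperSpace X] [MeasurableSpace X] [OpensMeasurableSpace X]
  {μ : Measure X} [IsFiniteMeasureOnCompacts μ] {s : Set X}

theorem Continuous.integrableOn_of_isBounded {E : Type*} [NormedAddCommGroup E] {f : X → E}
    (hf : Continuous f) (hs : Bornology.IsBounded s) : IntegrableOn f s μ :=
  (hf.continuousOn.integrableOn_compact hs.isCompact_closure).mono_set subset_closure

theorem Continuous.memLp_restrict_of_isBounded {E : Type*} [NormedAddCommGroup E] {f : X → E}
    (hf : Continuous f) (hs : Bornology.IsBounded s) (p : ENNReal) : MemLp f p (μ.restrict s) := by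
  have : IsFiniteMeasure (μ.restrict s) := isFiniteMeasure_restrict.2
    (measure_mono subset_closure |>.trans_lt hs.isCompact_closure.measure_lt_top).ne
  obtain ⟨C, hC⟩ := hs.isCompact_closure.exists_bound_of_continuousOn hf.continuousOn
  exact MemLp.of_bound hf.aestronglyMeasurable C <| ae_restrict_of_ae_restrict_of_subset
    subset_closure (ae_restrict_of_forall_mem isClosed_closure.measurableSet hC)

theorem setIntegral_le_mul_add_mul (hs : Bornology.IsBounded s) (hs' : MeasurableSet s)
    {F G H : X → ℝ} (hF : Continuous F) (hG : Continuous G) (hH : Continuous H) {a b : ℝ}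
    (h : ∀ x ∈ s, F x ≤ a * G x + b * H x) :
    ∫ x in s, F x ∂μ ≤ a * ∫ x in s, G x ∂μ + b * ∫ x in s, H x ∂μ := by
  rw [← integral_const_mul, ← integral_const_mul, ← integral_add
    ((hG.integrableOn_of_isBounded hs).const_mul a) ((hH.integrableOn_of_isBounded hs).const_mul b)]
  exact setIntegral_mono_on (hF.integrableOn_of_isBounded hs)
    (((hG.integrableOn_of_isBounded hs).const_mul a).add
      ((hH.integrableOn_of_isBounded hs).const_mul b)) hs' h

end ContinuousOnBounded

theorem integral_eq_integral_integral_insertNth {n : ℕ} (i : Fin (n + 1))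
    {G : EuclideanSpace ℝ (Fin (n + 1)) → ℝ} (hG : Integrable G) :
    ∫ x, G x = ∫ y : Fin n → ℝ, ∫ t : ℝ, G (WithLp.toLp 2 (i.insertNth t y)) := by
  have he := (EuclideanSpace.volume_preserving_symm_measurableEquiv_toLp (Fin (n + 1))).symm
  have hq : MeasurePreserving (MeasurableEquiv.piFinSuccAbove (fun _ => ℝ) i).symm
      ((volume : Measure ℝ).prod (volume : Measure (Fin n → ℝ))) volume :=
    (measurePreserving_piFinSuccAbove (fun _ => volume) i).symm
  have hG' := (hq.integrable_comp_emb (MeasurableEquiv.measurableEmbedding _)).2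
    ((he.integrable_comp_emb (MeasurableEquiv.measurableEmbedding _)).2 hG)
  rw [← he.integral_comp (MeasurableEquiv.measurableEmbedding _),
    ← hq.integral_comp (MeasurableEquiv.measurableEmbedding _), integral_prod_symm _ (by exact hG')]
  rfl

theorem toLp_insertNth_eq_add {n : ℕ} (i : Fin (n + 1)) (t : ℝ) (y : Fin n → ℝ) :
    WithLp.toLp 2 (i.insertNth t y) =
      WithLp.toLp 2 (i.insertNth 0 y) + t • EuclideanSpace.single i (1 : ℝ) := by
  ext j
  rcases eq_or_ne j i with rfl | hj
  · simp
  · obtain ⟨k, rfl⟩ := Fin.exists_succAbove_eq hj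
    simp [hj]

section PartialDerivatives

variable {d : ℕ}

noncomputable def partialDeriv (i : Fin d) (f : EuclideanSpace ℝ (Fin d) → ℝ)
    (x : EuclideanSpace ℝ (Fin d)) : ℝ :=
  fderiv ℝ f x (EuclideanSpace.single i 1)

noncomputable def gradNormSq (f : EuclideanSpace ℝ (Fin d) → ℝ)
    (x : EuclideanSpace ℝ (Fin d)) : ℝ :=
  ∑ i, partialDeriv i f x ^ 2

variable {f g : EuclideanSpace ℝ (Fin d) → ℝ} {x : EuclideanSpace ℝ (Fin d)}

theorem contDiff_partialDeriv {k : ℕ} (hf : ContDiff ℝ (k + 1) f) (i : Fin d) :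
    ContDiff ℝ k (partialDeriv i f) :=
  (hf.fderiv_right le_rfl).clm_apply contDiff_const

theorem continuous_partialDeriv (hf : ContDiff ℝ 1 f) (i : Fin d) :
    Continuous (partialDeriv i f) :=
  (contDiff_partialDeriv (k := 0) (by simpa using hf) i).continuous

theorem partialDeriv_mul (hf : DifferentiableAt ℝ f x) (hg : DifferentiableAt ℝ g x)
    (i : Fin d) :
    partialDeriv i (fun y => f y * g y) x =
      f x * partialDeriv i g x + g x * partialDeriv i f x := by
  simp [partialDeriv, fderiv_fun_mul hf hg]

theorem partialDeriv_coord (i : Fin d) : partialDeriv i (fun y => y i) x = 1 := by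
  have h : fderiv ℝ (fun y : EuclideanSpace ℝ (Fin d) => y i) x = EuclideanSpace.proj i :=
    (EuclideanSpace.proj (𝕜 := ℝ) i).fderiv
  simp [partialDeriv, h]

theorem partialDeriv_partialDeriv (hf : ContDiff ℝ 2 f) (i : Fin d) :
    partialDeriv i (partialDeriv i f) x =
      iteratedFDeriv ℝ 2 f x ![EuclideanSpace.single i 1, EuclideanSpace.single i 1] := by
  have hdf : DifferentiableAt ℝ (fderiv ℝ f) x :=
    (hf.fderiv_right (m := 1) le_rfl).differentiable one_ne_zero x
  change fderiv ℝ (fun y => fderiv ℝ f y (EuclideanSpace.single i 1)) x _ = _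
  rw [iteratedFDeriv_two_apply, fderiv_clm_apply hdf (differentiableAt_const _)]
  simp

theorem lap_eq_sum_partialDeriv (hf : ContDiff ℝ 2 f) (x : EuclideanSpace ℝ (Fin d)) :
    lap f x = ∑ i, partialDeriv i (partialDeriv i f) x := by
  simp only [lap, partialDeriv_partialDeriv hf]

theorem contDiff_lap {k : ℕ} (hf : ContDiff ℝ (k + 2) f) : ContDiff ℝ k (lap f) := by
  rw [funext (lap_eq_sum_partialDeriv (hf.of_le (by norm_cast; omega)))]
  exact ContDiff.sum fun i _ => contDiff_partialDeriv (contDiff_partialDeriv hf i) i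

theorem lap_mul (hf : ContDiff ℝ 2 f) (hg : ContDiff ℝ 2 g) (x : EuclideanSpace ℝ (Fin d)) :
    lap (fun y => f y * g y) x =
      f x * lap g x + 2 * ∑ i, partialDeriv i f x * partialDeriv i g x + g x * lap f x := by
  have hf1 : ∀ i, Differentiable ℝ (partialDeriv i f) := fun i =>
    (contDiff_partialDeriv (k := 1) hf i).differentiable one_ne_zero
  have hg1 : ∀ i, Differentiable ℝ (partialDeriv i g) := fun i =>
    (contDiff_partialDeriv (k := 1) hg i).differentiable one_ne_zero
  have hfd := hf.differentiable two_ne_zero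
  have hgd := hg.differentiable two_ne_zero
  have hsecond : ∀ i, partialDeriv i (partialDeriv i fun y => f y * g y) x =
      f x * partialDeriv i (partialDeriv i g) x + 2 * (partialDeriv i f x * partialDeriv i g x) +
        g x * partialDeriv i (partialDeriv i f) x := by
    intro i
    have hfirst : partialDeriv i (fun y => f y * g y) =
        fun y => f y * partialDeriv i g y + g y * partialDeriv i f y :=
      funext fun y => partialDeriv_mul (hfd y) (hgd y) i
    rw [hfirst, partialDeriv,
      fderiv_fun_add ((hfd x).fun_mul (hg1 i x)) ((hgd x).fun_mul (hf1 i x)),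
      add_apply, ← partialDeriv, ← partialDeriv,
      partialDeriv_mul (hfd x) (hg1 i x), partialDeriv_mul (hgd x) (hf1 i x)]
    ring
  simp only [lap_eq_sum_partialDeriv (hf.mul hg), lap_eq_sum_partialDeriv hf,
    lap_eq_sum_partialDeriv hg, hsecond, Finset.sum_add_distrib, Finset.mul_sum]

theorem abs_partialDeriv_le (f : EuclideanSpace ℝ (Fin d) → ℝ) (i : Fin d)
    (x : EuclideanSpace ℝ (Fin d)) : |partialDeriv i f x| ≤ ‖iteratedFDeriv ℝ 1 f x‖ := by
  have h := (iteratedFDeriv ℝ 1 f x).le_opNorm ![EuclideanSpace.single i 1]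
  rw [iteratedFDeriv_one_apply] at h
  simpa [partialDeriv, PiLp.norm_single] using h

theorem abs_lap_le (f : EuclideanSpace ℝ (Fin d) → ℝ) (x : EuclideanSpace ℝ (Fin d)) :
    |lap f x| ≤ d * ‖iteratedFDeriv ℝ 2 f x‖ := by
  set e : Fin d → Fin 2 → EuclideanSpace ℝ (Fin d) := fun i => ![EuclideanSpace.single i 1,
    EuclideanSpace.single i 1]
  calc |lap f x| ≤ ∑ i : Fin d, |iteratedFDeriv ℝ 2 f x (e i)| := Finset.abs_sum_le_sum_abs _ _
    _ ≤ ∑ _i : Fin d, ‖iteratedFDeriv ℝ 2 f x‖ := Finset.sum_le_sum fun i _ => by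
        simpa [e, PiLp.norm_single, Fin.prod_univ_two] using
          (iteratedFDeriv ℝ 2 f x).le_opNorm (e i)
    _ = d * ‖iteratedFDeriv ℝ 2 f x‖ := by simp

end PartialDerivatives

theorem setIntegral_partialDeriv_eq_zero {d : ℕ} {D : Set (EuclideanSpace ℝ (Fin d))}
    (hD : IsOpen D) (hDb : Bornology.IsBounded D) {F : EuclideanSpace ℝ (Fin d) → ℝ}
    (hF : ContDiff ℝ 1 F) (hfr : ∀ x ∈ frontier D, F x = 0) (i : Fin d) :
    ∫ x in D, partialDeriv i F x = 0 := by
  obtain ⟨n, rfl⟩ : ∃ n, d = n + 1 := Nat.exists_eq_add_one.2 i.pos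
  have hFd : Differentiable ℝ F := hF.differentiable one_ne_zero
  rw [← integral_indicator hD.measurableSet, integral_eq_integral_integral_insertNth i
    (((continuous_partialDeriv hF i).integrableOn_of_isBounded hDb).integrable_indicator
      hD.measurableSet)]
  refine (integral_congr_ae (Eventually.of_forall fun y => ?_)).trans (integral_zero _ _)
  set σ : ℝ → EuclideanSpace ℝ (Fin (n + 1)) := fun t => WithLp.toLp 2 (i.insertNth t y)
  have hσ : σ = fun t => σ 0 + t • EuclideanSpace.single i 1 :=
    funext (toLp_insertNth_eq_add i · y)
  have hσiso : Isometry σ := Isometry.of_dist_eq fun s t => by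
    rw [hσ, dist_add_left, dist_eq_norm, ← sub_smul, norm_smul, PiLp.norm_single, norm_one,
      mul_one, Real.dist_eq, Real.norm_eq_abs]
  have hσderiv : ∀ t, HasDerivAt σ (EuclideanSpace.single i 1) t := fun t => by
    rw [hσ]
    simpa using ((hasDerivAt_id t).smul_const (EuclideanSpace.single i (1 : ℝ))).const_add (σ 0)
  have hderiv : deriv (F ∘ σ) = partialDeriv i F ∘ σ :=
    funext fun t => ((hFd (σ t)).hasFDerivAt.comp_hasDerivAt t (hσderiv t)).deriv
  have hDσ : IsOpen (σ ⁻¹' D) := hD.preimage hσiso.continuous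
  change ∫ t, D.indicator (partialDeriv i F) (σ t) = 0
  simp_rw [← indicator_comp_right]
  rw [integral_indicator hDσ.measurableSet, ← hderiv]
  exact setIntegral_deriv_eq_zero hDσ (hσiso.antilipschitz.isBounded_preimage hDb)
    (hF.comp (by rw [hσ]; fun_prop))
    fun t ht => hfr _ (hσiso.continuous.frontier_preimage_subset D ht)

section Energy

variable {d : ℕ} {D : Set (EuclideanSpace ℝ (Fin d))} {w : EuclideanSpace ℝ (Fin d) → ℝ}

theorem continuous_gradNormSq (hw : ContDiff ℝ 1 w) : Continuous (gradNormSq w) :=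
  continuous_finsetSum _ fun i _ => (continuous_partialDeriv hw i).pow 2

theorem sq_partialDeriv_le_gradNormSq (i : Fin d) (x : EuclideanSpace ℝ (Fin d)) :
    partialDeriv i w x ^ 2 ≤ gradNormSq w x :=
  Finset.single_le_sum (f := fun i => partialDeriv i w x ^ 2) (fun _ _ => sq_nonneg _)
    (Finset.mem_univ i)

theorem setIntegral_gradNormSq_eq_neg (hD : IsOpen D) (hDb : Bornology.IsBounded D)
    (hw : ContDiff ℝ 2 w) (hfr : ∀ x ∈ frontier D, w x = 0) :
    ∫ x in D, gradNormSq w x = -∫ x in D, w x * lap w x := by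
  have hw1 : ContDiff ℝ 1 w := hw.of_le (by norm_num)
  have hpd1 : ∀ i, ContDiff ℝ 1 (partialDeriv i w) := fun i => contDiff_partialDeriv hw i
  have hdiv : ∀ x, ∑ i, partialDeriv i (fun y => w y * partialDeriv i w y) x =
      w x * lap w x + gradNormSq w x := fun x => by
    simp only [partialDeriv_mul ((hw1.differentiable one_ne_zero) x)
      (((hpd1 _).differentiable one_ne_zero) x), lap_eq_sum_partialDeriv hw, gradNormSq,
      Finset.mul_sum, ← Finset.sum_add_distrib, sq]
  have hzero : ∫ x in D, (w x * lap w x + gradNormSq w x) = 0 := by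
    simp_rw [← hdiv]
    rw [integral_finsetSum _ fun i _ =>
      (continuous_partialDeriv (hw1.mul (hpd1 i)) i).integrableOn_of_isBounded hDb]
    exact Finset.sum_eq_zero fun i _ => setIntegral_partialDeriv_eq_zero hD hDb
      (hw1.mul (hpd1 i)) (fun x hx => by simp [hfr x hx]) i
  rw [integral_add
    ((hw.continuous.fun_mul (contDiff_lap (k := 0) hw).continuous).integrableOn_of_isBounded hDb)
    ((continuous_gradNormSq hw1).integrableOn_of_isBounded hDb)] at hzero
  linarith

theorem setIntegral_sq_le_setIntegral_partialDeriv_sq (hD : IsOpen D) {R : ℝ}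
    (hR : D ⊆ Metric.closedBall 0 R) (hw : ContDiff ℝ 1 w) (hfr : ∀ x ∈ frontier D, w x = 0)
    (i : Fin d) : ∫ x in D, w x ^ 2 ≤ 4 * R ^ 2 * ∫ x in D, partialDeriv i w x ^ 2 := by
  have hDb : Bornology.IsBounded D := Metric.isBounded_closedBall.subset hR
  have hcoord : ContDiff ℝ 1 fun y : EuclideanSpace ℝ (Fin d) => y i :=
    (EuclideanSpace.proj (𝕜 := ℝ) i).contDiff
  have hpd : Continuous (partialDeriv i w) := continuous_partialDeriv hw i
  -- `∂ᵢ (xᵢ w²) = w² + 2 xᵢ w ∂ᵢ w` integrates to zero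
  have hzero : ∫ x in D, (w x ^ 2 + x i * (2 * w x * partialDeriv i w x)) = 0 := by
    rw [← setIntegral_partialDeriv_eq_zero hD hDb (hcoord.mul (hw.mul hw)) (fun x hx => by
      simp [hfr x hx]) i]
    refine setIntegral_congr_fun hD.measurableSet fun x _ => ?_
    have hwd := hw.differentiable one_ne_zero x
    rw [partialDeriv_mul (hcoord.differentiable one_ne_zero x) (hwd.fun_mul hwd),
      partialDeriv_mul hwd hwd, partialDeriv_coord]
    ring
  have hwc := hw.continuous
  have hcross :
      Continuous fun x : EuclideanSpace ℝ (Fin d) => x i * (2 * w x * partialDeriv i w x) :=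
    hcoord.continuous.mul ((continuous_const.mul hwc).mul hpd)
  rw [integral_add ((hwc.fun_pow 2).integrableOn_of_isBounded hDb)
    (hcross.integrableOn_of_isBounded hDb)] at hzero
  have hbound : ∫ x in D, -(x i * (2 * w x * partialDeriv i w x)) ≤
      1 / 2 * (∫ x in D, w x ^ 2) + 2 * R ^ 2 * ∫ x in D, partialDeriv i w x ^ 2 := by
    refine setIntegral_le_mul_add_mul hDb hD.measurableSet hcross.neg (hwc.fun_pow 2)
      (hpd.fun_pow 2) fun x hx => ?_
    have hxi : |x i| ≤ R := (PiLp.norm_apply_le x i).trans (by simpa using hR hx)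
    have hxi2 : x i ^ 2 ≤ R ^ 2 := sq_le_sq' (abs_le.1 hxi).1 (abs_le.1 hxi).2
    simp only [Pi.neg_apply]
    nlinarith [sq_nonneg (w x + 2 * x i * partialDeriv i w x),
      mul_le_mul_of_nonneg_right hxi2 (sq_nonneg (partialDeriv i w x))]
  rw [integral_neg] at hbound
  linarith

theorem setIntegral_sq_le_setIntegral_gradNormSq [NeZero d] (hD : IsOpen D) {R : ℝ}
    (hR : D ⊆ Metric.closedBall 0 R) (hw : ContDiff ℝ 1 w) (hfr : ∀ x ∈ frontier D, w x = 0) :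
    ∫ x in D, w x ^ 2 ≤ 4 * R ^ 2 * ∫ x in D, gradNormSq w x :=
  (setIntegral_sq_le_setIntegral_partialDeriv_sq hD hR hw hfr 0).trans <|
    mul_le_mul_of_nonneg_left (setIntegral_mono_on
      (((continuous_partialDeriv hw 0).fun_pow 2).integrableOn_of_isBounded
        (Metric.isBounded_closedBall.subset hR))
      ((continuous_gradNormSq hw).integrableOn_of_isBounded (Metric.isBounded_closedBall.subset hR))
      hD.measurableSet fun x _ => sq_partialDeriv_le_gradNormSq 0 x) (by positivity)

theorem setIntegral_gradNormSq_le_setIntegral_lap_sq [NeZero d] (hD : IsOpen D) {R : ℝ}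
    (hR0 : 0 < R) (hR : D ⊆ Metric.closedBall 0 R) (hw : ContDiff ℝ 2 w)
    (hfr : ∀ x ∈ frontier D, w x = 0) :
    ∫ x in D, gradNormSq w x ≤ 4 * R ^ 2 * ∫ x in D, lap w x ^ 2 := by
  have hDb : Bornology.IsBounded D := Metric.isBounded_closedBall.subset hR
  have hlap : Continuous (lap w) := (contDiff_lap (k := 0) hw).continuous
  have hpoincare := setIntegral_sq_le_setIntegral_gradNormSq hD hR (hw.of_le (by norm_num)) hfr
  have hyoung : -∫ x in D, w x * lap w x ≤
      1 / (8 * R ^ 2) * (∫ x in D, w x ^ 2) + 2 * R ^ 2 * ∫ x in D, lap w x ^ 2 := by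
    rw [← integral_neg]
    refine setIntegral_le_mul_add_mul hDb hD.measurableSet (hw.continuous.mul hlap).neg
      (hw.continuous.fun_pow 2) (hlap.fun_pow 2) fun x _ => ?_
    -- Young's inequality, weighted so that the Poincaré inequality turns the `w²` term into half
    -- of the left-hand side
    have h := div_nonneg (sq_nonneg (w x + 4 * R ^ 2 * lap w x))
      (by positivity : (0 : ℝ) ≤ 8 * R ^ 2)
    simp only [Pi.neg_apply, Pi.mul_apply]
    field_simp at h ⊢
    nlinarith [h]
  rw [← setIntegral_gradNormSq_eq_neg hD hDb hw hfr] at hyoung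
  have hhalf : 1 / (8 * R ^ 2) * ∫ x in D, w x ^ 2 ≤ 1 / 2 * ∫ x in D, gradNormSq w x := by
    calc 1 / (8 * R ^ 2) * ∫ x in D, w x ^ 2
        ≤ 1 / (8 * R ^ 2) * (4 * R ^ 2 * ∫ x in D, gradNormSq w x) := by gcongr
      _ = 1 / 2 * ∫ x in D, gradNormSq w x := by field_simp; ring
  linarith

end Energy

section Coefficient

variable {d : ℕ} {α v : EuclideanSpace ℝ (Fin d) → ℝ} {x : EuclideanSpace ℝ (Fin d)} {M : ℝ}

theorem gradNormSq_le (hM : ‖iteratedFDeriv ℝ 1 α x‖ ≤ M) : gradNormSq α x ≤ d * M ^ 2 := by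
  refine (Finset.sum_le_sum fun i _ => ?_).trans_eq (by simp : ∑ _i : Fin d, M ^ 2 = d * M ^ 2)
  exact sq_le_sq' (abs_le.1 ((abs_partialDeriv_le α i x).trans hM)).1
    (abs_le.1 ((abs_partialDeriv_le α i x).trans hM)).2

theorem sq_sum_partialDeriv_mul_le (hM : ‖iteratedFDeriv ℝ 1 α x‖ ≤ M) :
    (∑ i, partialDeriv i α x * partialDeriv i v x) ^ 2 ≤ d * M ^ 2 * gradNormSq v x :=
  (Finset.sum_mul_sq_le_sq_mul_sq _ _ _).trans
    (mul_le_mul_of_nonneg_right (gradNormSq_le hM) (Finset.sum_nonneg fun _ _ => sq_nonneg _))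

theorem sq_mul_gradNormSq_le (hα : DifferentiableAt ℝ α x) (hv : DifferentiableAt ℝ v x)
    (hM : ‖iteratedFDeriv ℝ 1 α x‖ ≤ M) :
    α x ^ 2 * gradNormSq v x ≤
      2 * gradNormSq (fun y => α y * v y) x + 2 * d * M ^ 2 * v x ^ 2 := by
  have hterm : ∀ i, (α x * partialDeriv i v x) ^ 2 ≤
      2 * partialDeriv i (fun y => α y * v y) x ^ 2 + 2 * v x ^ 2 * partialDeriv i α x ^ 2 := by
    intro i
    rw [partialDeriv_mul hα hv]
    nlinarith [sq_nonneg (α x * partialDeriv i v x + 2 * (v x * partialDeriv i α x))]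
  calc α x ^ 2 * gradNormSq v x = ∑ i, (α x * partialDeriv i v x) ^ 2 := by
        simp only [gradNormSq, Finset.mul_sum, mul_pow]
    _ ≤ 2 * gradNormSq (fun y => α y * v y) x + 2 * v x ^ 2 * gradNormSq α x := by
        simp only [gradNormSq, Finset.mul_sum, ← Finset.sum_add_distrib]
        exact Finset.sum_le_sum fun i _ => hterm i
    _ ≤ 2 * gradNormSq (fun y => α y * v y) x + 2 * d * M ^ 2 * v x ^ 2 := by
        nlinarith [gradNormSq_le hM, sq_nonneg (v x)]

theorem sq_mul_sq_lap_le (hα : ContDiff ℝ 2 α) (hv : ContDiff ℝ 2 v)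
    (hM1 : ‖iteratedFDeriv ℝ 1 α x‖ ≤ M) (hM2 : ‖iteratedFDeriv ℝ 2 α x‖ ≤ M) :
    α x ^ 2 * lap v x ^ 2 ≤
      2 * lap (fun y => α y * v y) x ^ 2 + 4 * d * M ^ 2 * (4 * gradNormSq v x + d * v x ^ 2) := by
  set S := ∑ i, partialDeriv i α x * partialDeriv i v x
  have hprod : α x * lap v x = lap (fun y => α y * v y) x - (2 * S + v x * lap α x) := by
    rw [lap_mul hα hv]; ring
  have hS : S ^ 2 ≤ d * M ^ 2 * gradNormSq v x := sq_sum_partialDeriv_mul_le hM1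
  have hlapα : lap α x ^ 2 ≤ (d * M) ^ 2 := by
    have h := (abs_lap_le α x).trans (mul_le_mul_of_nonneg_left hM2 (Nat.cast_nonneg d))
    exact sq_le_sq' (abs_le.1 h).1 (abs_le.1 h).2
  calc α x ^ 2 * lap v x ^ 2 = (lap (fun y => α y * v y) x - (2 * S + v x * lap α x)) ^ 2 := by
        rw [← hprod]; ring
    _ ≤ 2 * lap (fun y => α y * v y) x ^ 2 + 16 * S ^ 2 + 4 * v x ^ 2 * lap α x ^ 2 := by
        nlinarith [sq_nonneg (lap (fun y => α y * v y) x + (2 * S + v x * lap α x)),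
          sq_nonneg (2 * S - v x * lap α x)]
    _ ≤ _ := by nlinarith [mul_le_mul_of_nonneg_left hlapα (sq_nonneg (v x))]

variable {D : Set (EuclideanSpace ℝ (Fin d))} {αmin : ℝ}

theorem setIntegral_sq_le_of_le_mul (hD : IsOpen D) (hDb : Bornology.IsBounded D)
    (hαmin : 0 ≤ αmin) (hα : ∀ x ∈ D, αmin ≤ α x) (hαc : Continuous α) (hvc : Continuous v) :
    αmin ^ 2 * ∫ x in D, v x ^ 2 ≤ ∫ x in D, (α x * v x) ^ 2 := by
  rw [← integral_const_mul]
  refine setIntegral_mono_on (((hvc.fun_pow 2).const_mul _).integrableOn_of_isBounded hDb)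
    (((hαc.mul hvc).fun_pow 2).integrableOn_of_isBounded hDb) hD.measurableSet fun x hx => ?_
  rw [mul_pow]
  exact mul_le_mul_of_nonneg_right (pow_le_pow_left₀ hαmin (hα x hx) 2) (sq_nonneg _)

theorem setIntegral_gradNormSq_le_of_mul (hD : IsOpen D) (hDb : Bornology.IsBounded D)
    (hαmin : 0 ≤ αmin) (hα : ∀ x ∈ D, αmin ≤ α x) (hαreg : ContDiff ℝ 1 α) (hv : ContDiff ℝ 1 v)
    (hα1 : ∀ x ∈ D, ‖iteratedFDeriv ℝ 1 α x‖ ≤ M) :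
    αmin ^ 2 * ∫ x in D, gradNormSq v x ≤
      2 * (∫ x in D, gradNormSq (fun y => α y * v y) x) + 2 * d * M ^ 2 * ∫ x in D, v x ^ 2 := by
  rw [← integral_const_mul]
  refine setIntegral_le_mul_add_mul hDb hD.measurableSet ((continuous_gradNormSq hv).const_mul _)
    (continuous_gradNormSq (hαreg.mul hv)) (hv.continuous.fun_pow 2) fun x hx => ?_
  exact (mul_le_mul_of_nonneg_right (pow_le_pow_left₀ hαmin (hα x hx) 2)
    (Finset.sum_nonneg fun _ _ => sq_nonneg _)).trans
      (sq_mul_gradNormSq_le (hαreg.differentiable one_ne_zero x) (hv.differentiable one_ne_zero x)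
        (hα1 x hx))

theorem setIntegral_sq_lap_le_of_mul (hD : IsOpen D) (hDb : Bornology.IsBounded D)
    (hαmin : 0 ≤ αmin) (hα : ∀ x ∈ D, αmin ≤ α x) (hαreg : ContDiff ℝ 2 α) (hv : ContDiff ℝ 2 v)
    (hα1 : ∀ x ∈ D, ‖iteratedFDeriv ℝ 1 α x‖ ≤ M) (hα2 : ∀ x ∈ D, ‖iteratedFDeriv ℝ 2 α x‖ ≤ M) :
    αmin ^ 2 * ∫ x in D, lap v x ^ 2 ≤
      2 * (∫ x in D, lap (fun y => α y * v y) x ^ 2) +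
        4 * d * M ^ 2 * (4 * (∫ x in D, gradNormSq v x) + d * ∫ x in D, v x ^ 2) := by
  have hv1 : ContDiff ℝ 1 v := hv.of_le (by norm_num)
  have hlower : Continuous fun x => 4 * gradNormSq v x + d * v x ^ 2 :=
    ((continuous_gradNormSq hv1).const_mul 4).add ((hv.continuous.fun_pow 2).const_mul _)
  have hsplit : ∫ x in D, (4 * gradNormSq v x + d * v x ^ 2) ≤
      4 * (∫ x in D, gradNormSq v x) + d * ∫ x in D, v x ^ 2 :=
    setIntegral_le_mul_add_mul hDb hD.measurableSet hlower (continuous_gradNormSq hv1)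
      (hv.continuous.fun_pow 2) fun _ _ => le_rfl
  have hlap : αmin ^ 2 * ∫ x in D, lap v x ^ 2 ≤
      2 * (∫ x in D, lap (fun y => α y * v y) x ^ 2) +
        4 * d * M ^ 2 * ∫ x in D, (4 * gradNormSq v x + d * v x ^ 2) := by
    rw [← integral_const_mul]
    refine setIntegral_le_mul_add_mul hDb hD.measurableSet
      (((contDiff_lap (k := 0) hv).continuous.fun_pow 2).const_mul _)
      ((contDiff_lap (k := 0) (hαreg.mul hv)).continuous.fun_pow 2) hlower fun x hx => ?_
    exact (mul_le_mul_of_nonneg_right (pow_le_pow_left₀ hαmin (hα x hx) 2) (sq_nonneg _)).trans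
      (sq_mul_sq_lap_le hαreg hv (hα1 x hx) (hα2 x hx))
  nlinarith [mul_le_mul_of_nonneg_left hsplit (by positivity : (0 : ℝ) ≤ 4 * d * M ^ 2)]

end Coefficient

theorem exists_setIntegral_sq_lap_le {d : ℕ} [NeZero d] {D : Set (EuclideanSpace ℝ (Fin d))}
    (hD : IsOpen D) {R : ℝ} (hR0 : 0 < R) (hR : D ⊆ Metric.closedBall 0 R)
    {α : EuclideanSpace ℝ (Fin d) → ℝ} {αmin M : ℝ} (hαmin : 0 < αmin)
    (hα : ∀ x ∈ D, αmin ≤ α x) (hαreg : ContDiff ℝ 2 α)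
    (hα1 : ∀ x ∈ D, ‖iteratedFDeriv ℝ 1 α x‖ ≤ M) (hα2 : ∀ x ∈ D, ‖iteratedFDeriv ℝ 2 α x‖ ≤ M) :
    ∃ K, 0 ≤ K ∧ ∀ v : EuclideanSpace ℝ (Fin d) → ℝ, ContDiff ℝ 2 v →
      (∀ x ∈ frontier D, v x = 0) →
      ∫ x in D, lap v x ^ 2 ≤ K * ∫ x in D, lap (fun y => α y * v y) x ^ 2 := by
  have hDb : Bornology.IsBounded D := Metric.isBounded_closedBall.subset hR
  set A := αmin ^ 2
  have hA : 0 < A := by positivity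
  set ke := 16 * R ^ 4 / A
  set kg := (8 * R ^ 2 + 2 * d * M ^ 2 * ke) / A
  refine ⟨(2 + 4 * d * M ^ 2 * (4 * kg + d * ke)) / A, by positivity, fun v hv hfr => ?_⟩
  set w := fun y => α y * v y
  have hw : ContDiff ℝ 2 w := hαreg.mul hv
  have hwfr : ∀ x ∈ frontier D, w x = 0 := fun x hx => by simp [w, hfr x hx]
  set L := ∫ x in D, lap w x ^ 2
  have hgradw : ∫ x in D, gradNormSq w x ≤ 4 * R ^ 2 * L :=
    setIntegral_gradNormSq_le_setIntegral_lap_sq hD hR0 hR hw hwfr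
  have hw2 : ∫ x in D, w x ^ 2 ≤ 4 * R ^ 2 * ∫ x in D, gradNormSq w x :=
    setIntegral_sq_le_setIntegral_gradNormSq hD hR (hw.of_le (by norm_num)) hwfr
  have hv2 := setIntegral_sq_le_of_le_mul hD hDb hαmin.le hα hαreg.continuous hv.continuous
  have hgradv := setIntegral_gradNormSq_le_of_mul hD hDb hαmin.le hα (hαreg.of_le (by norm_num))
    (hv.of_le (by norm_num)) hα1
  have hlapv := setIntegral_sq_lap_le_of_mul hD hDb hαmin.le hα hαreg hv hα1 hα2
  have he : ∫ x in D, v x ^ 2 ≤ ke * L := by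
    rw [div_mul_eq_mul_div, le_div_iff₀' hA]
    nlinarith [mul_le_mul_of_nonneg_left hgradw (by positivity : (0 : ℝ) ≤ 4 * R ^ 2)]
  have hg : ∫ x in D, gradNormSq v x ≤ kg * L := by
    rw [div_mul_eq_mul_div, le_div_iff₀' hA]
    nlinarith [mul_le_mul_of_nonneg_left he (by positivity : (0 : ℝ) ≤ 2 * d * M ^ 2)]
  rw [div_mul_eq_mul_div, le_div_iff₀' hA]
  nlinarith [mul_le_mul_of_nonneg_left hg (by positivity : (0 : ℝ) ≤ 16 * d * M ^ 2),
    mul_le_mul_of_nonneg_left he (by positivity : (0 : ℝ) ≤ 4 * d * d * M ^ 2)]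

/-- If `α ∈ W^{2,∞}(D)` with `α ≥ α_min > 0`, then for every
`f ∈ X(D)` the solution `u = Tf` of `Δ(αΔu) = βf` in `D`, `u = Δu = 0` on
`∂D`, satisfies `Δ²u ∈ L²(D)` with `‖Δ²u‖_{L²(D)} ≤ C ‖f‖_{L²(D)}`, with `C`
independent of `f`. -/
theorem bilaplacian_regularity_estimate
    (d : ℕ) (D : Set (EuclideanSpace ℝ (Fin d)))
    (hD : IsOpen D) (hDb : Bornology.IsBounded D)
    (α β : EuclideanSpace ℝ (Fin d) → ℝ)
    (αmin : ℝ) (hαmin : 0 < αmin) (hα : ∀ x, αmin ≤ α x)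
    (hαreg : ContDiff ℝ 2 α)
    (Mα : ℝ) (hαW2 : ∀ x, |α x| ≤ Mα ∧ ‖iteratedFDeriv ℝ 1 α x‖ ≤ Mα ∧
      ‖iteratedFDeriv ℝ 2 α x‖ ≤ Mα)
    (Mβ : ℝ) (hβ : ∀ x, |β x| ≤ Mβ) :
    ∃ C > 0, ∀ f u : EuclideanSpace ℝ (Fin d) → ℝ,
      ContDiff ℝ 2 f → (∀ x ∈ frontier D, f x = 0) →
      ContDiff ℝ 4 u →
      (∀ x ∈ D, lap (fun y => α y * lap u y) x = β x * f x) →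
      (∀ x ∈ frontier D, u x = 0) → (∀ x ∈ frontier D, lap u x = 0) →
      (MemLp (fun x => lap (lap u) x) 2 (volume.restrict D) ∧
       Real.sqrt (∫ x in D, (lap (lap u) x) ^ 2) ≤ C * Real.sqrt (∫ x in D, (f x) ^ 2)) := by
  rcases Nat.eq_zero_or_pos d with rfl | hd
  · exact ⟨1, one_pos, fun f u _ _ _ _ _ _ => by simp [lap]⟩
  have : NeZero d := ⟨hd.ne'⟩
  obtain ⟨R, hR0, hR⟩ := hDb.subset_closedBall_lt 0 0
  obtain ⟨K, hK0, hK⟩ := exists_setIntegral_sq_lap_le hD hR0 hR hαmin (fun x _ => hα x) hαreg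
    (fun x _ => (hαW2 x).2.1) (fun x _ => (hαW2 x).2.2)
  refine ⟨Real.sqrt (K * Mβ ^ 2) + 1, by positivity, fun f u hf _ hu hequ _ hlub => ⟨?_, ?_⟩⟩
  · exact (contDiff_lap (k := 0) (contDiff_lap hu)).continuous.memLp_restrict_of_isBounded hDb 2
  have hsource : ∫ x in D, lap (fun y => α y * lap u y) x ^ 2 ≤ Mβ ^ 2 * ∫ x in D, f x ^ 2 := by
    have hlapw := (contDiff_lap (k := 0) (hαreg.mul (contDiff_lap hu))).continuous
    rw [← integral_const_mul]
    refine setIntegral_mono_on ((hlapw.fun_pow 2).integrableOn_of_isBounded hDb)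
      (((hf.continuous.fun_pow 2).const_mul _).integrableOn_of_isBounded hDb) hD.measurableSet
      fun x hx => ?_
    rw [hequ x hx, mul_pow]
    exact mul_le_mul_of_nonneg_right (sq_le_sq' (abs_le.1 (hβ x)).1 (abs_le.1 (hβ x)).2)
      (sq_nonneg _)
  calc Real.sqrt (∫ x in D, lap (lap u) x ^ 2)
      ≤ Real.sqrt (K * Mβ ^ 2 * ∫ x in D, f x ^ 2) := by
        rw [mul_assoc]
        exact Real.sqrt_le_sqrt ((hK _ (contDiff_lap hu) hlub).trans (by gcongr))
    _ = Real.sqrt (K * Mβ ^ 2) * Real.sqrt (∫ x in D, f x ^ 2) := Real.sqrt_mul (by positivity) _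
    _ ≤ (Real.sqrt (K * Mβ ^ 2) + 1) * Real.sqrt (∫ x in D, f x ^ 2) := by gcongr; linarith
end

section
/- Let a, b be Hermitian sesquilinear forms on X(D) with a bounded and b(u,u) ≥ β_min ‖u‖²_{L²} for β_min > 0. If (τ_j, u_j) and (τ_{j,N}, u_{j,N}) are eigenpairs as above with ‖u_{j,N}‖_{L²(D)} = 1, then |τ_{j,N} − τ_j| ≤ C(1 + τ_j) ‖u_{j,N} − u_j‖²_{X(D)} for some C > 0 independent of N. -/
/-- With `a` bounded on `X(D)`, `b` Hermitian and satisfying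
`b(u,u) ≥ β_min ‖u‖²_{L²}` (the `L²` norm realized through the embedding
`ι : X(D) → L²(D)`), if `(τ_j, u_j)` and `(τ_{j,N}, u_{j,N})` are eigenpairs
with `‖u_{j,N}‖_{L²(D)} = 1`, then
`|τ_{j,N} − τ_j| ≤ C (1 + τ_j) ‖u_{j,N} − u_j‖²_{X(D)}` with `C` independent
of `N` (i.e. of the Galerkin subspace and its eigenpair). -/
theorem eigenvalue_difference_bound
    {X Y : Type*} [NormedAddCommGroup X] [InnerProductSpace ℝ X]
    [NormedAddCommGroup Y] [InnerProductSpace ℝ Y]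
    (ι : X →L[ℝ] Y)
    (Cemb : ℝ) (hemb : ∀ u, ‖ι u‖ ≤ Cemb * ‖u‖)
    (a b : X →ₗ[ℝ] X →ₗ[ℝ] ℝ)
    (ha : ∀ u v, a u v = a v u) (hb : ∀ u v, b u v = b v u)
    (M : ℝ) (hM : ∀ u v, |a u v| ≤ M * ‖u‖ * ‖v‖)
    (Cb : ℝ) (hCb : ∀ u v, |b u v| ≤ Cb * ‖ι u‖ * ‖ι v‖)
    (βmin : ℝ) (hβ : 0 < βmin) (hblow : ∀ u, βmin * ‖ι u‖ ^ 2 ≤ b u u)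
    (τj : ℝ) (hτj : 0 < τj) (uj : X)
    (h1 : ∀ v, a uj v = τj * b uj v) :
    ∃ C > 0, ∀ (XN : Submodule ℝ X) (τjN : ℝ) (ujN : X),
      ujN ∈ XN → ‖ι ujN‖ = 1 →
      (∀ v ∈ XN, a ujN v = τjN * b ujN v) →
      |τjN - τj| ≤ C * (1 + τj) * ‖ujN - uj‖ ^ 2 := by
  refine ⟨(max M 0 + max Cb 0 * Cemb ^ 2 + 1) / βmin, by positivity, ?_⟩
  intro XN τjN ujN hmem hnorm hgal
  set e := ujN - uj with he
  -- key identity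
  have h2 : a ujN ujN = τjN * b ujN ujN := hgal ujN hmem
  have hexp : a e e - τj * b e e = (τjN - τj) * b ujN ujN := by
    simp only [he, map_sub, LinearMap.sub_apply]
    rw [ha ujN uj, h2, h1 ujN, h1 uj, hb ujN uj]
    ring
  -- lower bound on b ujN ujN
  have hblb : βmin ≤ b ujN ujN := by
    have := hblow ujN
    rwa [hnorm, one_pow, mul_one] at this
  have hbpos : 0 < b ujN ujN := lt_of_lt_of_le hβ hblb
  -- bounds
  have habs : |a e e| ≤ max M 0 * ‖e‖ * ‖e‖ := by
    refine (hM e e).trans ?_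
    have : M * ‖e‖ * ‖e‖ ≤ max M 0 * ‖e‖ * ‖e‖ := by
      apply mul_le_mul_of_nonneg_right (mul_le_mul_of_nonneg_right (le_max_left _ _)
        (norm_nonneg _)) (norm_nonneg _)
    exact this
  have hιe : ‖ι e‖ ≤ Cemb * ‖e‖ := hemb e
  have hιe2 : ‖ι e‖ * ‖ι e‖ ≤ (Cemb * ‖e‖) * (Cemb * ‖e‖) :=
    mul_self_le_mul_self (norm_nonneg _) hιe
  have hCembnn : 0 ≤ Cemb * ‖e‖ := le_trans (norm_nonneg _) hιe
  have hbabs : |b e e| ≤ max Cb 0 * Cemb ^ 2 * ‖e‖ ^ 2 := by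
    refine (hCb e e).trans ?_
    have h' : Cb * ‖ι e‖ * ‖ι e‖ ≤ max Cb 0 * ((Cemb * ‖e‖) * (Cemb * ‖e‖)) := by
      rw [mul_assoc]
      exact mul_le_mul (le_max_left _ _) hιe2 (mul_nonneg (norm_nonneg _) (norm_nonneg _))
        (le_max_right _ _)
    calc Cb * ‖ι e‖ * ‖ι e‖ ≤ max Cb 0 * ((Cemb * ‖e‖) * (Cemb * ‖e‖)) := h'
      _ = max Cb 0 * Cemb ^ 2 * ‖e‖ ^ 2 := by ring
  -- main chain
  have key : |τjN - τj| * βmin ≤ (max M 0 + τj * (max Cb 0 * Cemb ^ 2)) * ‖e‖ ^ 2 := by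
    have step1 : |τjN - τj| * βmin ≤ |τjN - τj| * b ujN ujN :=
      mul_le_mul_of_nonneg_left hblb (abs_nonneg _)
    have step2 : |τjN - τj| * b ujN ujN = |(τjN - τj) * b ujN ujN| := by
      rw [abs_mul, abs_of_pos hbpos]
    have step3 : |(τjN - τj) * b ujN ujN| ≤ |a e e| + τj * |b e e| := by
      rw [← hexp]
      calc |a e e - τj * b e e| ≤ |a e e| + |τj * b e e| := abs_sub _ _
        _ = |a e e| + τj * |b e e| := by rw [abs_mul, abs_of_pos hτj]
    have step4 : |a e e| + τj * |b e e| ≤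
        (max M 0 + τj * (max Cb 0 * Cemb ^ 2)) * ‖e‖ ^ 2 := by
      have : τj * |b e e| ≤ τj * (max Cb 0 * Cemb ^ 2 * ‖e‖ ^ 2) :=
        mul_le_mul_of_nonneg_left hbabs hτj.le
      nlinarith [habs, sq_abs (‖e‖), norm_nonneg e]
    linarith [step1, step2 ▸ step1, step3, step4]
  rw [div_mul_eq_mul_div, div_mul_eq_mul_div, le_div_iff₀ hβ]
  have hterm : (max M 0 + τj * (max Cb 0 * Cemb ^ 2)) * ‖e‖ ^ 2 ≤
      (max M 0 + max Cb 0 * Cemb ^ 2 + 1) * (1 + τj) * ‖e‖ ^ 2 := by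
    have h0 : 0 ≤ max M 0 := le_max_right _ _
    have h0' : 0 ≤ max Cb 0 * Cemb ^ 2 := mul_nonneg (le_max_right _ _) (sq_nonneg _)
    nlinarith [sq_nonneg (‖e‖), hτj, mul_nonneg (sq_nonneg ‖e‖) h0,
      mul_nonneg (sq_nonneg ‖e‖) hτj.le,
      mul_nonneg (mul_nonneg (sq_nonneg ‖e‖) hτj.le) h0,
      mul_nonneg (sq_nonneg ‖e‖) h0']
  calc |τjN - τj| * βmin ≤ (max M 0 + τj * (max Cb 0 * Cemb ^ 2)) * ‖e‖ ^ 2 := key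
    _ ≤ (max M 0 + max Cb 0 * Cemb ^ 2 + 1) * (1 + τj) * ‖e‖ ^ 2 := hterm
end
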